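/- Let Ψ : ℝ⁴ → ℂ⁴ be a continuously differentiable Dirac solution for the 4-potential a = (a₀,a₁,a₂,a₃) and mass κ with κ ≠ 0, and suppose that (Ψ*δ₄Ψ)(x) = 0 for every x ∈ ℝ⁴. Then the open set {x : (Ψᵀγ₂Ψ)(x) ≠ 0} is dense in the open set {x : Ψ(x) ≠ 0}; equivalently, for every nonempty open subset U of {x : Ψ(x) ≠ 0} there exists x ∈ U with (Ψᵀγ₂Ψ)(x) ≠ 0. -/

import Mathlib

noncomputable section

open Complex Matrix MeasureTheory

/-- The Dirac matrix γ₁ in the standard representation. -/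
def γ1 : Matrix (Fin 4) (Fin 4) ℂ := !![0,0,0,-I; 0,0,-I,0; 0,I,0,0; I,0,0,0]
/-- The Dirac matrix γ₂ in the standard representation. -/
def γ2 : Matrix (Fin 4) (Fin 4) ℂ := !![0,0,0,-1; 0,0,1,0; 0,1,0,0; -1,0,0,0]
/-- The Dirac matrix γ₃ in the standard representation. -/
def γ3 : Matrix (Fin 4) (Fin 4) ℂ := !![0,0,-I,0; 0,0,0,I; I,0,0,0; 0,-I,0,0]
/-- The Dirac matrix γ₄ in the standard representation. -/
def γ4 : Matrix (Fin 4) (Fin 4) ℂ := !![1,0,0,0; 0,1,0,0; 0,0,-1,0; 0,0,0,-1]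
/-- γ₅ = γ₁γ₂γ₃γ₄. -/
def γ5 : Matrix (Fin 4) (Fin 4) ℂ := γ1 * γ2 * γ3 * γ4
/-- δ₁ = γ₁ + γ₅γ₁. -/
def δ1 : Matrix (Fin 4) (Fin 4) ℂ := γ1 + γ5 * γ1
/-- δ₂ = γ₂ + γ₅γ₂. -/
def δ2 : Matrix (Fin 4) (Fin 4) ℂ := γ2 + γ5 * γ2
/-- δ₃ = γ₃ + γ₅γ₃. -/
def δ3 : Matrix (Fin 4) (Fin 4) ℂ := γ3 + γ5 * γ3
/-- δ₄ = γ₄ + γ₅γ₄. -/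
def δ4 : Matrix (Fin 4) (Fin 4) ℂ := γ4 + γ5 * γ4

/-- The sesquilinear form v* M v (v a column vector, v* its conjugate transpose). -/
def qc (M : Matrix (Fin 4) (Fin 4) ℂ) (v : Fin 4 → ℂ) : ℂ := star v ⬝ᵥ M.mulVec v
/-- The bilinear form vᵀ M v (v a column vector, vᵀ its transpose). -/
def qt (M : Matrix (Fin 4) (Fin 4) ℂ) (v : Fin 4 → ℂ) : ℂ := v ⬝ᵥ M.mulVec v

/-- The partial derivative ∂_μ of a spinor field on ℝ⁴. -/
def pd (μ : Fin 4) (Ψ : (Fin 4 → ℝ) → Fin 4 → ℂ) (x : Fin 4 → ℝ) : Fin 4 → ℂ :=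
  fderiv ℝ Ψ x (Pi.single μ 1)

/-- The partial derivative ∂_μ of a complex scalar field on ℝ⁴. -/
def pds (μ : Fin 4) (g : (Fin 4 → ℝ) → ℂ) (x : Fin 4 → ℝ) : ℂ :=
  fderiv ℝ g x (Pi.single μ 1)

/-- The bidirectional derivative ∂_μ↔(Ψ* M Ψ) := Ψ* M (∂_μΨ) − (∂_μΨ)* M Ψ. -/
def bd (μ : Fin 4) (M : Matrix (Fin 4) (Fin 4) ℂ) (Ψ : (Fin 4 → ℝ) → Fin 4 → ℂ)
    (x : Fin 4 → ℝ) : ℂ :=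
  star (Ψ x) ⬝ᵥ M.mulVec (pd μ Ψ x) - star (pd μ Ψ x) ⬝ᵥ M.mulVec (Ψ x)

/-- Ψ is a Dirac solution for the 4-potential (a₀,a₁,a₂,a₃) and mass κ:
Ψ is differentiable and Σ_{μ=1}^{3} γ_μ(∂_μΨ − i a_μΨ) − i γ₄(∂₀Ψ + i a₀Ψ) + κΨ = 0 on ℝ⁴. -/
def DiracSolution (Ψ : (Fin 4 → ℝ) → Fin 4 → ℂ)
    (a0 a1 a2 a3 : (Fin 4 → ℝ) → ℝ) (κ : ℝ) : Prop :=
  Differentiable ℝ Ψ ∧ ∀ x : Fin 4 → ℝ,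
    γ1.mulVec (pd 1 Ψ x - (I * (a1 x : ℂ)) • Ψ x)
      + γ2.mulVec (pd 2 Ψ x - (I * (a2 x : ℂ)) • Ψ x)
      + γ3.mulVec (pd 3 Ψ x - (I * (a3 x : ℂ)) • Ψ x)
      - I • γ4.mulVec (pd 0 Ψ x + (I * (a0 x : ℂ)) • Ψ x)
      + (κ : ℂ) • Ψ x = 0


/-!
Write p = (Ψ₀ + Ψ₂, Ψ₁ + Ψ₃) and q = (Ψ₀ − Ψ₂, Ψ₁ − Ψ₃) for the two chiral halves of Ψ.
Then Ψ*δ₄Ψ = ⟨q, p⟩ and Ψᵀγ₂Ψ = det(p, q), so if both vanish p and q are orthogonal and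
parallel in ℂ², one of them is zero, and Ψ is an eigenvector of γ₅ with eigenvalue ±1.
If Ψᵀγ₂Ψ vanished on an open U, then, as the (+1)-eigenspace condition is closed, Ψ would stay
in one eigenspace of γ₅ on a neighbourhood of some x ∈ U, and hence so would its partial
derivatives at x. Since γ₅ anticommutes with every γ_μ, the derivative and potential terms of
the Dirac equation then lie in the opposite eigenspace from κΨ, so κΨ(x) = 0, contradicting
x ∈ supp Ψ.
-/

open Filter Topology

lemma γ5_eq : γ5 = !![0,0,-1,0; 0,0,0,-1; -1,0,0,0; 0,-1,0,0] := by
  ext i j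
  fin_cases i <;> fin_cases j <;>
    simp [γ5, γ1, γ2, γ3, γ4, Matrix.mul_apply, Fin.sum_univ_four]

lemma γ5_mulVec (v : Fin 4 → ℂ) : γ5 *ᵥ v = ![-v 2, -v 3, -v 0, -v 1] := by
  rw [γ5_eq]; ext i
  fin_cases i <;> simp [Matrix.mulVec, dotProduct, Fin.sum_univ_four]

lemma qc_δ4 (v : Fin 4 → ℂ) : qc δ4 v =
    starRingEnd ℂ (v 0 - v 2) * (v 0 + v 2) + starRingEnd ℂ (v 1 - v 3) * (v 1 + v 3) := by
  rw [qc, δ4, Matrix.add_mulVec, ← Matrix.mulVec_mulVec, γ5_mulVec]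
  simp [γ4, Matrix.mulVec, dotProduct, Fin.sum_univ_four]
  ring

lemma qt_γ2 (v : Fin 4 → ℂ) : qt γ2 v = 2 * (v 1 * v 2 - v 0 * v 3) := by
  simp [qt, γ2, Matrix.mulVec, dotProduct, Fin.sum_univ_four]
  ring

lemma eq_zero_or_eq_zero_of_orthogonal_of_parallel {p₁ p₂ q₁ q₂ : ℂ}
    (horth : starRingEnd ℂ q₁ * p₁ + starRingEnd ℂ q₂ * p₂ = 0)
    (hpar : p₁ * q₂ = p₂ * q₁) : (p₁ = 0 ∧ p₂ = 0) ∨ (q₁ = 0 ∧ q₂ = 0) := by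
  by_cases hq : q₁ = 0 ∧ q₂ = 0
  · exact Or.inr hq
  have hnorm : ((Complex.normSq q₁ + Complex.normSq q₂ : ℝ) : ℂ) ≠ 0 := by
    rw [Complex.ofReal_ne_zero]
    intro h
    rw [add_eq_zero_iff_of_nonneg (Complex.normSq_nonneg _) (Complex.normSq_nonneg _),
      Complex.normSq_eq_zero, Complex.normSq_eq_zero] at h
    exact hq h
  have hconj₁ := Complex.mul_conj q₁
  have hconj₂ := Complex.mul_conj q₂
  left
  constructor
  · refine (mul_eq_zero.1 ?_).resolve_left hnorm
    push_cast
    linear_combination q₁ * horth + starRingEnd ℂ q₂ * hpar - p₁ * hconj₁ - p₁ * hconj₂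
  · refine (mul_eq_zero.1 ?_).resolve_left hnorm
    push_cast
    linear_combination q₂ * horth - starRingEnd ℂ q₁ * hpar - p₂ * hconj₁ - p₂ * hconj₂

lemma γ5_mulVec_eq_or_eq_neg (v : Fin 4 → ℂ) (hδ4 : qc δ4 v = 0) (hγ2 : qt γ2 v = 0) :
    γ5 *ᵥ v = v ∨ γ5 *ᵥ v = -v := by
  rw [qc_δ4] at hδ4
  rw [qt_γ2] at hγ2
  rcases eq_zero_or_eq_zero_of_orthogonal_of_parallel (p₁ := v 0 + v 2) (p₂ := v 1 + v 3)
    (q₁ := v 0 - v 2) (q₂ := v 1 - v 3) hδ4 (by linear_combination hγ2) with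
    ⟨h₀, h₁⟩ | ⟨h₀, h₁⟩
  · left
    rw [← eq_neg_iff_add_eq_zero] at h₀ h₁
    ext i; fin_cases i <;> simp [γ5_mulVec, h₀, h₁]
  · right
    rw [sub_eq_zero] at h₀ h₁
    ext i; fin_cases i <;> simp [γ5_mulVec, h₀, h₁]

lemma mulVec_mulVec_eq_neg_smul_of_anticomm {n R : Type*} [Fintype n] [CommRing R]
    {M N : Matrix n n R} (hMN : M * N = -(N * M)) {s : R} {v : n → R} (hv : M *ᵥ v = s • v) :
    M *ᵥ (N *ᵥ v) = -s • (N *ᵥ v) := by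
  rw [Matrix.mulVec_mulVec, hMN, Matrix.neg_mulVec, ← Matrix.mulVec_mulVec, hv,
    Matrix.mulVec_smul, neg_smul]

lemma γ5_mul_γ1 : γ5 * γ1 = -(γ1 * γ5) := by
  rw [γ5_eq]; ext i j
  fin_cases i <;> fin_cases j <;> simp [γ1, Matrix.mul_apply, Fin.sum_univ_four]

lemma γ5_mul_γ2 : γ5 * γ2 = -(γ2 * γ5) := by
  rw [γ5_eq]; ext i j
  fin_cases i <;> fin_cases j <;> simp [γ2, Matrix.mul_apply, Fin.sum_univ_four]

lemma γ5_mul_γ3 : γ5 * γ3 = -(γ3 * γ5) := by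
  rw [γ5_eq]; ext i j
  fin_cases i <;> fin_cases j <;> simp [γ3, Matrix.mul_apply, Fin.sum_univ_four]

lemma γ5_mul_γ4 : γ5 * γ4 = -(γ4 * γ5) := by
  rw [γ5_eq]; ext i j
  fin_cases i <;> fin_cases j <;> simp [γ4, Matrix.mul_apply, Fin.sum_univ_four]

lemma eq_zero_of_dirac_eq_of_γ5_eigen {s : ℂ} (hs : s ≠ 0) {κ : ℝ} (hκ : κ ≠ 0)
    {P A₀ A₁ A₂ A₃ : Fin 4 → ℂ} (hP : γ5 *ᵥ P = s • P)
    (hA₀ : γ5 *ᵥ A₀ = s • A₀) (hA₁ : γ5 *ᵥ A₁ = s • A₁) (hA₂ : γ5 *ᵥ A₂ = s • A₂)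
    (hA₃ : γ5 *ᵥ A₃ = s • A₃)
    (hD : γ1 *ᵥ A₁ + γ2 *ᵥ A₂ + γ3 *ᵥ A₃ - I • γ4 *ᵥ A₀ + (κ : ℂ) • P = 0) : P = 0 := by
  have hγ5D := congrArg (γ5 *ᵥ ·) hD
  simp only [Matrix.mulVec_add, Matrix.mulVec_sub, Matrix.mulVec_smul, Matrix.mulVec_zero,
    hP, mulVec_mulVec_eq_neg_smul_of_anticomm γ5_mul_γ1 hA₁,
    mulVec_mulVec_eq_neg_smul_of_anticomm γ5_mul_γ2 hA₂,
    mulVec_mulVec_eq_neg_smul_of_anticomm γ5_mul_γ3 hA₃,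
    mulVec_mulVec_eq_neg_smul_of_anticomm γ5_mul_γ4 hA₀] at hγ5D
  have h : (2 * s * κ) • P = 0 := by
    linear_combination (norm := module) s • hD + hγ5D
  simpa [hs, hκ] using h

lemma ContinuousLinearMap.map_fderiv_eq_zero_of_eventually {𝕜 E F G : Type*}
    [NontriviallyNormedField 𝕜] [NormedAddCommGroup E] [NormedSpace 𝕜 E]
    [NormedAddCommGroup F] [NormedSpace 𝕜 F] [NormedAddCommGroup G] [NormedSpace 𝕜 G]
    (L : F →L[𝕜] G) {f : E → F} {x : E} (hf : DifferentiableAt 𝕜 f x)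
    (h : ∀ᶠ y in 𝓝 x, L (f y) = 0) (v : E) : L (fderiv 𝕜 f x v) = 0 := by
  have hzero : HasFDerivAt (fun y => L (f y)) (0 : E →L[𝕜] G) x :=
    (hasFDerivAt_const 0 x).congr_of_eventuallyEq h
  have hcomp := (L.hasFDerivAt.comp x hf.hasFDerivAt).unique hzero
  exact congrArg (· v) hcomp

lemma mulVec_pd_eq_smul_of_eventually {M : Matrix (Fin 4) (Fin 4) ℂ} {s : ℂ}
    {Ψ : (Fin 4 → ℝ) → Fin 4 → ℂ} {x : Fin 4 → ℝ} (hΨ : DifferentiableAt ℝ Ψ x)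
    (h : ∀ᶠ y in 𝓝 x, M *ᵥ Ψ y = s • Ψ y) (μ : Fin 4) :
    M *ᵥ pd μ Ψ x = s • pd μ Ψ x := by
  let L : (Fin 4 → ℂ) →L[ℝ] (Fin 4 → ℂ) :=
    LinearMap.toContinuousLinearMap ((Matrix.mulVecLin M - s • LinearMap.id).restrictScalars ℝ)
  have hL : ∀ᶠ y in 𝓝 x, L (Ψ y) = 0 := h.mono fun y hy => by simp [L, hy]
  simpa [L, pd, sub_eq_zero] using L.map_fderiv_eq_zero_of_eventually hΨ hL (Pi.single μ 1)

lemma DiracSolution.eq_zero_of_eventually_γ5_eigen {Ψ : (Fin 4 → ℝ) → Fin 4 → ℂ}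
    {a0 a1 a2 a3 : (Fin 4 → ℝ) → ℝ} {κ : ℝ} (hΨ : DiracSolution Ψ a0 a1 a2 a3 κ) (hκ : κ ≠ 0)
    {s : ℂ} (hs : s ≠ 0) {x : Fin 4 → ℝ} (h : ∀ᶠ y in 𝓝 x, γ5 *ᵥ Ψ y = s • Ψ y) : Ψ x = 0 := by
  have hP : γ5 *ᵥ Ψ x = s • Ψ x := h.self_of_nhds
  have hA (μ : Fin 4) (c : ℂ) : γ5 *ᵥ (pd μ Ψ x + c • Ψ x) = s • (pd μ Ψ x + c • Ψ x) := by
    rw [Matrix.mulVec_add, Matrix.mulVec_smul, hP,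
      mulVec_pd_eq_smul_of_eventually (hΨ.1 x) h μ, smul_add, smul_comm]
  refine eq_zero_of_dirac_eq_of_γ5_eigen hs hκ hP (hA 0 _) ?_ ?_ ?_ (hΨ.2 x) <;>
    simpa only [sub_eq_add_neg, ← neg_smul] using hA _ _

theorem IsOpen.exists_mem_eventually_or {X : Type*} [TopologicalSpace X] {U : Set X}
    (hU : IsOpen U) (hne : U.Nonempty) {p q : X → Prop} (hp : IsClosed {x | p x})
    (hpq : ∀ x ∈ U, p x ∨ q x) : ∃ x ∈ U, (∀ᶠ y in 𝓝 x, p y) ∨ ∀ᶠ y in 𝓝 x, q y := by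
  by_cases hall : ∀ x ∈ U, p x
  · obtain ⟨x, hx⟩ := hne
    exact ⟨x, hx, .inl (eventually_of_mem (hU.mem_nhds hx) hall)⟩
  push Not at hall
  obtain ⟨x, hx, hpx⟩ := hall
  refine ⟨x, hx, .inr ?_⟩
  filter_upwards [hU.mem_nhds hx, hp.isOpen_compl.mem_nhds hpx] with y hyU hyp
  exact (hpq y hyU).resolve_left hyp

theorem gamma2_form_dense_in_support_general
    (Ψ : (Fin 4 → ℝ) → Fin 4 → ℂ)
    (a0 a1 a2 a3 : (Fin 4 → ℝ) → ℝ) (κ : ℝ)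
    (hΨ : DiracSolution Ψ a0 a1 a2 a3 κ) (hκ : κ ≠ 0)
    (hδ4 : ∀ x, qc δ4 (Ψ x) = 0) :
    ∀ U : Set (Fin 4 → ℝ), IsOpen U → U.Nonempty → U ⊆ {x | Ψ x ≠ 0} →
      ∃ x ∈ U, qt γ2 (Ψ x) ≠ 0 := by
  intro U hU hne hsupp
  by_contra! hγ2
  have hcont : Continuous Ψ := hΨ.1.continuous
  obtain ⟨x, hx, hchiral⟩ := hU.exists_mem_eventually_or hne
    (isClosed_eq (continuous_const.matrix_mulVec hcont) hcont)
    fun y hy => γ5_mulVec_eq_or_eq_neg (Ψ y) (hδ4 y) (hγ2 y hy)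
  refine hsupp hx ?_
  rcases hchiral with h | h
  · exact hΨ.eq_zero_of_eventually_γ5_eigen hκ one_ne_zero (by simpa using h)
  · exact hΨ.eq_zero_of_eventually_γ5_eigen hκ (neg_ne_zero.2 one_ne_zero) (by simpa using h)

/-- if a C¹ Dirac solution with κ ≠ 0 satisfies Ψ*δ₄Ψ ≡ 0, then
{x : Ψᵀγ₂Ψ ≠ 0} is dense in {x : Ψ(x) ≠ 0}: every nonempty open subset of the support
of Ψ contains a point where Ψᵀγ₂Ψ ≠ 0. -/
theorem gamma2_form_dense_in_support
    (Ψ : (Fin 4 → ℝ) → Fin 4 → ℂ)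
    (a0 a1 a2 a3 : (Fin 4 → ℝ) → ℝ) (κ : ℝ)
    (hC1 : ContDiff ℝ 1 Ψ)
    (hΨ : DiracSolution Ψ a0 a1 a2 a3 κ) (hκ : κ ≠ 0)
    (hδ4 : ∀ x, qc δ4 (Ψ x) = 0) :
    ∀ U : Set (Fin 4 → ℝ), IsOpen U → U.Nonempty → U ⊆ {x | Ψ x ≠ 0} →
      ∃ x ∈ U, qt γ2 (Ψ x) ≠ 0 :=
  gamma2_form_dense_in_support_general Ψ a0 a1 a2 a3 κ hΨ hκ hδ4
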